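/- arXiv:2108.04538 — 4 statements merged into one kernel-verified Lean document; each statement's English description precedes it below -/
import Mathlib

section
/- For every g ∈ SU(d,1) one has X(g) ≠ 0, and for every τ ∈ ℋ the complex number j(g,τ)/X(g) has strictly positive real part (in particular j(g,τ) ≠ 0). -/
open Matrix Complex
open scoped ComplexOrder

noncomputable section

/-- `SLC n` is the special linear group of `n × n` complex matrices. -/
abbrev SLC (n : ℕ) := Matrix.SpecialLinearGroup (Fin n) ℂ

/-- The standard Hermitian matrix of signature `(d,1)` used to define `SU(d,1)`:
`J_{1,d+1} = J_{d+1,1} = 1`, `J_{i,i} = 1` for `2 ≤ i ≤ d` (1-indexed), and `0` otherwise. -/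
def Jmat (d : ℕ) : Matrix (Fin (d+1)) (Fin (d+1)) ℂ :=
  Matrix.of fun i j =>
    if (i = 0 ∧ j = Fin.last d) ∨ (i = Fin.last d ∧ j = 0) then 1
    else if i = j ∧ i ≠ 0 ∧ i ≠ Fin.last d then 1 else 0

/-- `SU(d,1)`, realised as the subgroup of `SL_{d+1}(ℂ)` preserving the Hermitian
form given by `Jmat d`. -/
def SUd1 (d : ℕ) : Subgroup (SLC (d+1)) where
  carrier := {g | (↑g : Matrix (Fin (d+1)) (Fin (d+1)) ℂ)ᴴ * Jmat d * ↑g = Jmat d}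
  one_mem' := by simp
  mul_mem' := by
    intro a b ha hb
    simp only [Set.mem_setOf_eq] at ha hb ⊢
    rw [Matrix.SpecialLinearGroup.coe_mul, Matrix.conjTranspose_mul]
    calc (↑b)ᴴ * (↑a)ᴴ * Jmat d * ((↑a : Matrix (Fin (d+1)) (Fin (d+1)) ℂ) * ↑b)
        = (↑b)ᴴ * ((↑a : Matrix (Fin (d+1)) (Fin (d+1)) ℂ)ᴴ * Jmat d * ↑a) * ↑b := by
          simp only [Matrix.mul_assoc]
      _ = Jmat d := by rw [ha]; exact hb
  inv_mem' := by
    intro a ha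
    simp only [Set.mem_setOf_eq] at ha ⊢
    set A : Matrix (Fin (d+1)) (Fin (d+1)) ℂ := ↑a with hA
    set B : Matrix (Fin (d+1)) (Fin (d+1)) ℂ := ↑(a⁻¹) with hB
    have h1 : A * B = 1 := by
      rw [hA, hB, ← Matrix.SpecialLinearGroup.coe_mul, mul_inv_cancel]
      simp
    calc Bᴴ * Jmat d * B
        = Bᴴ * (Aᴴ * Jmat d * A) * B := by rw [ha]
      _ = (A * B)ᴴ * Jmat d * (A * B) := by
          rw [Matrix.conjTranspose_mul]; simp only [Matrix.mul_assoc]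
      _ = Jmat d := by rw [h1]; simp

/-- The Hermitian form `⟨v,w⟩ = conj(v)ᵀ J w` on `ℂ^{d+1}`. -/
def Hform (d : ℕ) (v w : Fin (d+1) → ℂ) : ℂ := star v ⬝ᵥ (Jmat d *ᵥ w)

/-- The symmetric space `ℋ = {τ ∈ ℂ^d : ⟨(τ;1),(τ;1)⟩ < 0}`. -/
def Hdom (d : ℕ) : Set (Fin d → ℂ) :=
  {τ | Hform d (Fin.snoc τ 1) (Fin.snoc τ 1) < 0}

/-- The automorphy factor `j(g,τ) = Cτ + D`. -/
def jfun (d : ℕ) (g : Matrix (Fin (d+1)) (Fin (d+1)) ℂ) (τ : Fin d → ℂ) : ℂ :=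
  (g *ᵥ Fin.snoc τ 1) (Fin.last d)

/-- The action `g*τ = (Cτ+D)⁻¹ (Aτ+B)` of `SU(d,1)` on `ℋ`. -/
def actH (d : ℕ) (g : Matrix (Fin (d+1)) (Fin (d+1)) ℂ) (τ : Fin d → ℂ) : Fin d → ℂ :=
  fun k => (g *ᵥ Fin.snoc τ 1) (Fin.castSucc k) / jfun d g τ

open scoped Classical in
/-- `X(g) = -g_{d+1,1}` if `g_{d+1,1} ≠ 0`, and `g_{d+1,d+1}` otherwise. -/
def Xfun (d : ℕ) (g : Matrix (Fin (d+1)) (Fin (d+1)) ℂ) : ℂ :=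
  if g (Fin.last d) 0 = 0 then g (Fin.last d) (Fin.last d) else -(g (Fin.last d) 0)

/-- The branch `j̃(g,τ) = Log(j(g,τ)/X(g)) + Log(X(g))` of the logarithm of `j(g,τ)`,
where `Log` is the principal branch (imaginary part in `(-π, π]`). -/
def jtilde (d : ℕ) (g : Matrix (Fin (d+1)) (Fin (d+1)) ℂ) (τ : Fin d → ℂ) : ℂ :=
  Complex.log (jfun d g τ / Xfun d g) + Complex.log (Xfun d g)

/-- A base point of `ℋ` (for `d ≥ 1`). -/
def baseTau (d : ℕ) : Fin d → ℂ := fun i => if (i : ℕ) = 0 then -1 else 0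

/-- The 2-cocycle `σ(g,h) = (1/(2πi))(j̃(gh,τ) − j̃(g,h*τ) − j̃(h,τ))`, evaluated at the
base point of `ℋ` (as proved in the paper, the value is an integer and does not depend
on the choice of `τ ∈ ℋ`). -/
def sigmaC (d : ℕ) (g h : Matrix (Fin (d+1)) (Fin (d+1)) ℂ) : ℂ :=
  (jtilde d (g * h) (baseTau d) - jtilde d g (actH d h (baseTau d)) - jtilde d h (baseTau d)) /
    (2 * Real.pi * Complex.I)

/-- The integer-valued 2-cocycle `σ` on `SU(d,1)` classifying its universal cover. -/
def sigmaZ (d : ℕ) (g h : Matrix (Fin (d+1)) (Fin (d+1)) ℂ) : ℤ := round (sigmaC d g h).re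

/-! The last row of `g ∈ SU(d,1)` is the linear form `⟨u, ·⟩` with `u = g⁻¹ e₁`, and `u` is
isotropic because `e₁` is. The form is positive semidefinite on the hyperplane `w_{d+1} = 0`;
applied to `w = v_{d+1} u - u_{d+1} v` this gives
`2 Re(conj(v_{d+1}) u_{d+1} ⟨u,v⟩) ≤ |v_{d+1}|² ⟨u,u⟩ + |u_{d+1}|² ⟨v,v⟩`.
For `v = (τ;1)` with `τ ∈ ℋ` the right side is `|u_{d+1}|² ⟨v,v⟩ < 0` as soon as
`u_{d+1} = conj(g_{d+1,1})` is nonzero, which is the claim for `X(g) = -g_{d+1,1}`.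
If `u_{d+1} = 0`, isotropy forces `u ∈ ℂ e₁`, and then `j(g,τ) = g_{d+1,d+1} = X(g)` for all `τ`. -/

open ComplexConjugate

section HermitianForm

variable {d : ℕ}

local notation "σ" => Equiv.swap (0 : Fin (d+1)) (Fin.last d)

lemma Jmat_apply (i j : Fin (d+1)) : Jmat d i j = if σ i = j then 1 else 0 := by
  rw [Jmat, Matrix.of_apply, Equiv.swap_apply_def]
  by_cases h : (0 : Fin (d+1)) = Fin.last d <;> split_ifs <;> grind

lemma Hform_apply (x y : Fin (d+1) → ℂ) : Hform d x y = ∑ i, star (x i) * y (σ i) := by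
  simp [Hform, dotProduct, Matrix.mulVec, Jmat_apply]

lemma star_Hform (x y : Fin (d+1) → ℂ) : star (Hform d x y) = Hform d y x := by
  rw [Hform_apply, Hform_apply, star_sum]
  exact Fintype.sum_equiv σ _ _ fun i => by simp [mul_comm]

lemma Hform_single_zero_left (y : Fin (d+1) → ℂ) :
    Hform d (Pi.single 0 1) y = y (Fin.last d) := by
  rw [Hform_apply, Finset.sum_eq_single 0 (fun i _ hi => by simp [hi]) (by simp)]
  simp

lemma Hform_single_zero_right (x : Fin (d+1) → ℂ) :
    Hform d x (Pi.single 0 1) = star (x (Fin.last d)) := by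
  rw [← star_Hform, Hform_single_zero_left]

lemma Hform_single_last_right (x : Fin (d+1) → ℂ) :
    Hform d x (Pi.single (Fin.last d) 1) = star (x 0) := by
  rw [Hform_apply, Finset.sum_eq_single 0
    (fun i _ hi => by simp [Equiv.swap_apply_eq_iff, hi]) (by simp)]
  simp

lemma Hform_smul_left (c : ℂ) (x y : Fin (d+1) → ℂ) :
    Hform d (c • x) y = star c * Hform d x y := by
  simp only [Hform, star_smul, smul_dotProduct, smul_eq_mul]

lemma Hform_sub_smul (a b : ℂ) (u v : Fin (d+1) → ℂ) :
    Hform d (a • u - b • v) (a • u - b • v) =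
      star a * a * Hform d u u - star a * b * Hform d u v - star b * a * Hform d v u
        + star b * b * Hform d v v := by
  simp only [Hform, star_sub, star_smul, mulVec_sub, mulVec_smul, sub_dotProduct, dotProduct_sub,
    smul_dotProduct, dotProduct_smul, smul_eq_mul]
  ring

lemma Hform_mulVec_mulVec {M : Matrix (Fin (d+1)) (Fin (d+1)) ℂ} (hM : Mᴴ * Jmat d * M = Jmat d)
    (x y : Fin (d+1) → ℂ) : Hform d (M *ᵥ x) (M *ᵥ y) = Hform d x y := by
  rw [Hform, Hform, star_mulVec, ← dotProduct_mulVec, mulVec_mulVec, mulVec_mulVec, hM]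

lemma Hform_self_of_last_eq_zero {w : Fin (d+1) → ℂ} (hw : w (Fin.last d) = 0) :
    Hform d w w = ↑(∑ i : Fin d, normSq (w i.succ)) := by
  rw [Complex.ofReal_sum, Hform_apply, Fin.sum_univ_succ, Equiv.swap_apply_left, hw, mul_zero,
    zero_add]
  refine Finset.sum_congr rfl fun i _ => ?_
  rw [Complex.normSq_eq_conj_mul_self]
  by_cases hi : i.succ = Fin.last d
  · simp [hi, hw]
  · rw [Equiv.swap_apply_of_ne_of_ne (Fin.succ_ne_zero i) hi]
    rfl

lemma Hform_self_nonneg_of_last_eq_zero {w : Fin (d+1) → ℂ} (hw : w (Fin.last d) = 0) :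
    0 ≤ Hform d w w := by
  rw [Hform_self_of_last_eq_zero hw]
  exact Complex.zero_le_real.2 (Finset.sum_nonneg fun i _ => normSq_nonneg _)

lemma eq_smul_single_of_Hform_self_eq_zero {w : Fin (d+1) → ℂ} (hw : w (Fin.last d) = 0)
    (hnull : Hform d w w = 0) : w = w 0 • Pi.single 0 1 := by
  rw [Hform_self_of_last_eq_zero hw, Complex.ofReal_eq_zero,
    Finset.sum_eq_zero_iff_of_nonneg fun i _ => normSq_nonneg _] at hnull
  ext i
  cases i using Fin.cases with
  | zero => simp
  | succ i => simpa using hnull i (Finset.mem_univ _)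

lemma two_re_mul_Hform_le (u v : Fin (d+1) → ℂ) :
    2 * (star (v (Fin.last d)) * u (Fin.last d) * Hform d u v).re ≤
      normSq (v (Fin.last d)) * (Hform d u u).re + normSq (u (Fin.last d)) * (Hform d v v).re := by
  set a := v (Fin.last d)
  set b := u (Fin.last d)
  have hw : (a • u - b • v) (Fin.last d) = 0 := by simp [a, b, mul_comm]
  have h := (Complex.nonneg_iff.1 (Hform_self_nonneg_of_last_eq_zero hw)).1
  rw [Hform_sub_smul, ← star_Hform u v] at h
  simp only [Complex.star_def, ← Complex.normSq_eq_conj_mul_self] at h ⊢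
  have hcross : (conj b * a * conj (Hform d u v)).re = (conj a * b * Hform d u v).re := by
    rw [← Complex.conj_re]; simp [mul_comm]
  simp only [Complex.add_re, Complex.sub_re, Complex.re_ofReal_mul, hcross] at h
  linarith

lemma re_Hform_div_pos_of_null {u v : Fin (d+1) → ℂ} (hu : Hform d u u = 0)
    (hu_last : u (Fin.last d) ≠ 0) (hv : (Hform d v v).re < 0) (hv_last : v (Fin.last d) = 1) :
    0 < (Hform d u v / -star (u (Fin.last d))).re := by
  have hb : 0 < normSq (u (Fin.last d)) := Complex.normSq_pos.2 hu_last
  have key := two_re_mul_Hform_le u v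
  rw [hu, hv_last, star_one, one_mul, Complex.zero_re, mul_zero, zero_add] at key
  have hdiv : Hform d u v / -star (u (Fin.last d)) =
      -(u (Fin.last d) * Hform d u v) / (normSq (u (Fin.last d)) : ℂ) := by
    rw [Complex.normSq_eq_conj_mul_self, Complex.star_def]
    field_simp
  rw [hdiv, Complex.div_ofReal_re, Complex.neg_re]
  exact div_pos (by nlinarith) hb

end HermitianForm

namespace Matrix.SpecialLinearGroup

variable {n R : Type*} [Fintype n] [DecidableEq n] [CommRing R]

lemma mulVec_inv_mulVec (g : SpecialLinearGroup n R) (v : n → R) :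
    (g : Matrix n n R) *ᵥ ((g⁻¹ : SpecialLinearGroup n R) : Matrix n n R) *ᵥ v = v := by
  rw [mulVec_mulVec, ← coe_mul, mul_inv_cancel, coe_one, one_mulVec]

lemma inv_mulVec_mulVec (g : SpecialLinearGroup n R) (v : n → R) :
    ((g⁻¹ : SpecialLinearGroup n R) : Matrix n n R) *ᵥ (g : Matrix n n R) *ᵥ v = v := by
  rw [mulVec_mulVec, ← coe_mul, inv_mul_cancel, coe_one, one_mulVec]

end Matrix.SpecialLinearGroup

section NullVec

variable {d : ℕ}

local notation:1024 "↑ₘ" A:1024 => ((A : SLC (d+1)) : Matrix (Fin (d+1)) (Fin (d+1)) ℂ)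

def nullVec (g : SLC (d+1)) : Fin (d+1) → ℂ := ↑ₘg⁻¹ *ᵥ Pi.single 0 1

lemma nullVec_ne_zero (g : SLC (d+1)) : nullVec g ≠ 0 := by
  intro h
  have h' := g.mulVec_inv_mulVec (Pi.single 0 1)
  rw [← nullVec, h, mulVec_zero] at h'
  simpa using congrFun h' 0

lemma mulVec_last_eq_Hform_nullVec {g : SLC (d+1)} (hg : g ∈ SUd1 d) (y : Fin (d+1) → ℂ) :
    (↑ₘg *ᵥ y) (Fin.last d) = Hform d (nullVec g) y := by
  rw [← Hform_single_zero_left (↑ₘg *ᵥ y), nullVec, ← Hform_mulVec_mulVec (inv_mem hg),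
    g.inv_mulVec_mulVec]

lemma Hform_nullVec_self (hd : (0 : Fin (d+1)) ≠ Fin.last d) {g : SLC (d+1)}
    (hg : g ∈ SUd1 d) : Hform d (nullVec g) (nullVec g) = 0 := by
  rw [← mulVec_last_eq_Hform_nullVec hg, nullVec, g.mulVec_inv_mulVec,
    Pi.single_eq_of_ne hd.symm]

lemma Xfun_eq_nullVec {g : SLC (d+1)} (hg : g ∈ SUd1 d) :
    Xfun d g = if nullVec g (Fin.last d) = 0 then star (nullVec g 0)
      else -star (nullVec g (Fin.last d)) := by
  have hrow (j : Fin (d+1)) : ↑ₘg (Fin.last d) j = Hform d (nullVec g) (Pi.single j 1) := by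
    rw [← mulVec_last_eq_Hform_nullVec hg, mulVec_single_one]
    rfl
  simp only [Xfun, hrow, Hform_single_zero_right, Hform_single_last_right, star_eq_zero]

end NullVec

/-- For every `g ∈ SU(d,1)` one has `X(g) ≠ 0`, and for every `τ ∈ ℋ`
the complex number `j(g,τ)/X(g)` has strictly positive real part; in particular
`j(g,τ) ≠ 0`. -/
theorem statement4 (d : ℕ) (hd : 2 ≤ d) (g : SLC (d+1)) (hg : g ∈ SUd1 d) :
    Xfun d (↑g) ≠ 0 ∧
    ∀ τ ∈ Hdom d,
      0 < (jfun d (↑g) τ / Xfun d (↑g)).re ∧ jfun d (↑g) τ ≠ 0 := by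
  have hd0 : (0 : Fin (d+1)) ≠ Fin.last d := by
    rw [ne_eq, Fin.ext_iff, Fin.val_zero, Fin.val_last]; omega
  have hj (τ : Fin d → ℂ) : jfun d g τ = Hform d (nullVec g) (Fin.snoc τ 1) :=
    mulVec_last_eq_Hform_nullVec hg _
  have hnull := Hform_nullVec_self hd0 hg
  rw [Xfun_eq_nullVec hg]
  split_ifs with hlast
  · have hu := eq_smul_single_of_Hform_self_eq_zero hlast hnull
    set c := nullVec g 0
    have hc : star c ≠ 0 := star_ne_zero.2 fun h0 => nullVec_ne_zero g (by rw [hu, h0, zero_smul])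
    have hjc (τ : Fin d → ℂ) : jfun d g τ = star c := by
      rw [hj, hu, Hform_smul_left, Hform_single_zero_left, Fin.snoc_last, mul_one]
    refine ⟨hc, fun τ _ => ?_⟩
    rw [hjc, div_self hc]
    exact ⟨by simp, hc⟩
  · refine ⟨neg_ne_zero.2 (star_ne_zero.2 hlast), fun τ hτ => ?_⟩
    have hpos : 0 < (jfun d g τ / -star (nullVec g (Fin.last d))).re := by
      rw [hj]
      exact re_Hform_div_pos_of_null hnull hlast (by simpa using (Complex.lt_def.1 hτ).1) (by simp)
    exact ⟨hpos, fun h => by simp [h] at hpos⟩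
end
end

section
/- For all g, h ∈ SU(d,1), the quantity (1/(2πi))(j̃(gh,τ) − j̃(g,h*τ) − j̃(h,τ)) is an integer and is independent of the choice of τ ∈ ℋ; moreover the resulting function σ : SU(d,1) × SU(d,1) → ℤ satisfies the inhomogeneous 2-cocycle identity σ(g,h) + σ(gh,k) = σ(g,hk) + σ(h,k) for all g,h,k ∈ SU(d,1). -/
open Matrix Complex
open scoped ComplexOrder

noncomputable section

open ComplexConjugate
open scoped Real

/-!
Because `J² = 1`, an element `g` of `SU(d,1)` also satisfies `g J gᴴ = J`, so the conjugate of
its last row `r` is isotropic: `2 Re(r_{d+1} r̄₁) + Σ_{1<k≤d} |r_k|² = 0`. Expanding `j(g,τ) r̄₁`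
and bounding each middle term by AM-GM, isotropy and `τ ∈ ℋ` give `Re(j(g,τ)/X(g)) > 0`; when
`r₁ = 0`, isotropy kills the middle of the row and `j(g,τ) = X(g)`. Hence `j̃(g,·)` is a
continuous logarithm of `j(g,·)` on `ℋ`. By the multiplicativity `j(gh,τ) = j(g,h*τ) j(h,τ)`,
the quantity `j̃(gh,τ) − j̃(g,h*τ) − j̃(h,τ)` is a continuous function on the convex set `ℋ` with
values in `2πiℤ`, hence constant. The cocycle identity compares its values at a base point `τ₀`
and at `k*τ₀`, where the terms telescope.
-/

lemma normSq_convex_comb {a b : ℝ} (z w : ℂ) (ha : 0 ≤ a) (hb : 0 ≤ b) (hab : a + b = 1) :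
    normSq ((a : ℂ) * z + (b : ℂ) * w) ≤ a * normSq z + b * normSq w := by
  simp only [normSq_apply, add_re, add_im, mul_re, mul_im, ofReal_re, ofReal_im]
  nlinarith [mul_nonneg ha hb, sq_nonneg (z.re - w.re), sq_nonneg (z.im - w.im)]

lemma two_mul_re_mul_conj_mul_le (a c t : ℂ) :
    2 * (c * conj a * t).re ≤ normSq a * normSq t + normSq c := by
  simp only [normSq_apply, mul_re, mul_im, conj_re, conj_im]
  nlinarith [sq_nonneg (a.re * t.re + a.im * t.im - c.re),
    sq_nonneg (a.re * t.im - a.im * t.re + c.im)]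

lemma re_div_pos_of_re_mul_conj_pos {z w : ℂ} (hw : w ≠ 0) (h : 0 < (z * conj w).re) :
    0 < (z / w).re := by
  rw [div_eq_mul_inv, inv_def, ← mul_assoc, re_mul_ofReal]
  exact mul_pos h (inv_pos.mpr (normSq_pos.mpr hw))

section Action

variable {d : ℕ} {g h : Matrix (Fin (d+1)) (Fin (d+1)) ℂ} {τ : Fin d → ℂ}

lemma mulVec_snoc_eq_smul (hj : jfun d g τ ≠ 0) :
    g *ᵥ Fin.snoc τ 1 = jfun d g τ • Fin.snoc (actH d g τ) 1 := by
  funext i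
  induction i using Fin.lastCases with
  | last => rw [Pi.smul_apply, Fin.snoc_last, smul_eq_mul, mul_one, jfun]
  | cast k => rw [Pi.smul_apply, Fin.snoc_castSucc, smul_eq_mul, actH, mul_div_cancel₀ _ hj]

lemma jfun_mul (hj : jfun d h τ ≠ 0) :
    jfun d (g * h) τ = jfun d g (actH d h τ) * jfun d h τ := by
  rw [jfun, ← mulVec_mulVec, mulVec_snoc_eq_smul hj, mulVec_smul, Pi.smul_apply, smul_eq_mul,
    mul_comm]
  rfl

lemma actH_mul (hj : jfun d h τ ≠ 0) :
    actH d (g * h) τ = actH d g (actH d h τ) := by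
  funext k
  rw [actH, actH, jfun_mul hj, ← mulVec_mulVec, mulVec_snoc_eq_smul hj, mulVec_smul,
    Pi.smul_apply, smul_eq_mul, mul_comm (jfun d g _), mul_div_mul_left _ _ hj]

lemma Hform_smul (c : ℂ) (v w : Fin (d+1) → ℂ) :
    Hform d (c • v) (c • w) = conj c * c * Hform d v w := by
  rw [Hform, Hform, star_smul, mulVec_smul, smul_dotProduct, dotProduct_smul, smul_smul,
    smul_eq_mul]
  rfl

lemma Hform_mulVec (hg : gᴴ * Jmat d * g = Jmat d) (v w : Fin (d+1) → ℂ) :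
    Hform d (g *ᵥ v) (g *ᵥ w) = Hform d v w := by
  rw [Hform, Hform, star_mulVec, mulVec_mulVec, ← dotProduct_mulVec, mulVec_mulVec,
    ← Matrix.mul_assoc, hg]

lemma mul_preserves_Jmat (hg : gᴴ * Jmat d * g = Jmat d) (hh : hᴴ * Jmat d * h = Jmat d) :
    (g * h)ᴴ * Jmat d * (g * h) = Jmat d := by
  calc (g * h)ᴴ * Jmat d * (g * h) = hᴴ * (gᴴ * Jmat d * g) * h := by
        simp only [conjTranspose_mul, Matrix.mul_assoc]
    _ = Jmat d := by rw [hg, hh]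

lemma continuous_jfun (g : Matrix (Fin (d+1)) (Fin (d+1)) ℂ) : Continuous (jfun d g) := by
  unfold jfun
  fun_prop

end Action

section HermitianForm

variable {d : ℕ} [NeZero d]

lemma sum_univ_eq_zero_add_last_add_sum_erase {M : Type*} [AddCommMonoid M]
    (f : Fin (d+1) → M) :
    ∑ i, f i = f 0 + f (Fin.last d) + ∑ k ∈ Finset.univ.erase (0 : Fin d), f k.castSucc := by
  rw [Fin.sum_univ_castSucc, ← Finset.add_sum_erase _ _ (Finset.mem_univ 0), Fin.castSucc_zero,
    add_right_comm]

lemma dotProduct_snoc (r : Fin (d+1) → ℂ) (τ : Fin d → ℂ) :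
    r ⬝ᵥ Fin.snoc τ 1 = r 0 * τ 0 + r (Fin.last d)
      + ∑ k ∈ Finset.univ.erase (0 : Fin d), r k.castSucc * τ k := by
  rw [dotProduct, sum_univ_eq_zero_add_last_add_sum_erase, ← Fin.castSucc_zero, Fin.snoc_castSucc,
    Fin.snoc_last, mul_one]
  simp only [Fin.snoc_castSucc]

lemma Jmat_mulVec (w : Fin (d+1) → ℂ) (i : Fin (d+1)) :
    (Jmat d *ᵥ w) i = if i = 0 then w (Fin.last d) else if i = Fin.last d then w 0 else w i := by
  have h0 : (0 : Fin (d+1)) ≠ Fin.last d := Fin.last_pos'.ne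
  simp only [mulVec, dotProduct, Jmat, of_apply, ite_mul, one_mul, zero_mul]
  split_ifs with hi hl
  · subst hi; simp [h0]
  · subst hl; simp [h0.symm]
  · simp [hi, hl]

lemma Jmat_mul_self : Jmat d * Jmat d = 1 := by
  ext i j
  have : (Jmat d * Jmat d) i j = (Jmat d *ᵥ fun k => Jmat d k j) i := rfl
  rw [this, Jmat_mulVec]
  simp only [Jmat, of_apply, one_apply]
  split_ifs <;> simp_all [Fin.ext_iff, -Fin.val_eq_zero_iff] <;> omega

lemma Hform_self (v : Fin (d+1) → ℂ) :
    Hform d v v = ((2 * (conj (v 0) * v (Fin.last d)).re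
      + ∑ k ∈ Finset.univ.erase (0 : Fin d), normSq (v k.castSucc) : ℝ) : ℂ) := by
  have hmid : ∀ k ∈ Finset.univ.erase (0 : Fin d),
      star v k.castSucc * (Jmat d *ᵥ v) k.castSucc = normSq (v k.castSucc) := by
    intro k hk
    rw [Jmat_mulVec, if_neg (by simpa using Finset.ne_of_mem_erase hk),
      if_neg (Fin.castSucc_ne_last k), normSq_eq_conj_mul_self]
    rfl
  rw [Hform, dotProduct, sum_univ_eq_zero_add_last_add_sum_erase, Finset.sum_congr rfl hmid,
    Jmat_mulVec, Jmat_mulVec, if_pos rfl, if_neg Fin.last_pos'.ne', if_pos rfl, ofReal_add,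
    ← Complex.add_conj, ofReal_sum, map_mul, conj_conj]
  simp only [Pi.star_apply, RCLike.star_def]
  ring

lemma mem_Hdom_iff {τ : Fin d → ℂ} :
    τ ∈ Hdom d ↔ 2 * (τ 0).re + ∑ k ∈ Finset.univ.erase (0 : Fin d), normSq (τ k) < 0 := by
  have h0 : (Fin.snoc τ 1 : Fin (d+1) → ℂ) 0 = τ 0 := by
    rw [← Fin.castSucc_zero, Fin.snoc_castSucc]
  rw [Hdom, Set.mem_ofPred_eq, Hform_self, h0, Fin.snoc_last, mul_one, conj_re]
  simp only [Fin.snoc_castSucc]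
  exact_mod_cast Iff.rfl

lemma baseTau_mem_Hdom : baseTau d ∈ Hdom d := by
  have hmid : ∀ k ∈ Finset.univ.erase (0 : Fin d), normSq (baseTau d k) = 0 := by
    intro k hk
    simp [baseTau, Fin.val_ne_zero_iff.mpr (Finset.ne_of_mem_erase hk)]
  rw [mem_Hdom_iff, Finset.sum_eq_zero hmid]
  simp [baseTau]

lemma convex_Hdom : Convex ℝ (Hdom d) := by
  intro x hx y hy a b ha hb hab
  rw [mem_Hdom_iff] at hx hy ⊢
  have happly : ∀ k, (a • x + b • y) k = (a : ℂ) * x k + (b : ℂ) * y k := fun k => by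
    simp [real_smul]
  have hmid := Finset.sum_le_sum fun k (_ : k ∈ Finset.univ.erase (0 : Fin d)) =>
    (happly k).symm ▸ normSq_convex_comb (x k) (y k) ha hb hab
  rw [Finset.sum_add_distrib, ← Finset.mul_sum, ← Finset.mul_sum] at hmid
  have hre : ((a • x + b • y) 0).re = a * (x 0).re + b * (y 0).re := by
    simp [happly]
  have hcomb : a • _ + b • _ ∈ Set.Iio (0 : ℝ) := convex_Iio 0 hx hy ha hb hab
  rw [Set.mem_Iio, smul_eq_mul, smul_eq_mul] at hcomb
  rw [hre]
  linarith

end HermitianForm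

section IsotropicRow

variable {d : ℕ} [NeZero d] {r : Fin (d+1) → ℂ}

lemma two_mul_re_add_sum_normSq_eq_zero (hr : Hform d (star r) (star r) = 0) :
    2 * (r (Fin.last d) * conj (r 0)).re
      + ∑ k ∈ Finset.univ.erase (0 : Fin d), normSq (r k.castSucc) = 0 := by
  rw [Hform_self, ofReal_eq_zero] at hr
  simp only [Pi.star_apply, Complex.star_def, conj_conj, normSq_conj] at hr
  rwa [← conj_re, map_mul, conj_conj, mul_comm (conj _)]

lemma eq_zero_of_isotropic_of_zero (hr : Hform d (star r) (star r) = 0) (h0 : r 0 = 0)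
    {k : Fin d} (hk : k ≠ 0) : r k.castSucc = 0 := by
  have hsum := two_mul_re_add_sum_normSq_eq_zero hr
  rw [h0, map_zero, mul_zero, zero_re, mul_zero, zero_add,
    Finset.sum_eq_zero_iff_of_nonneg fun _ _ => normSq_nonneg _] at hsum
  exact normSq_eq_zero.mp (hsum k (Finset.mem_erase.mpr ⟨hk, Finset.mem_univ _⟩))

lemma last_ne_zero_of_isotropic_of_zero (hr : Hform d (star r) (star r) = 0) (h0 : r 0 = 0)
    (hr0 : r ≠ 0) : r (Fin.last d) ≠ 0 := by
  refine fun hl => hr0 (funext fun i => ?_)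
  induction i using Fin.lastCases with
  | last => exact hl
  | cast k =>
    rcases eq_or_ne k 0 with rfl | hk
    · rwa [Fin.castSucc_zero]
    · exact eq_zero_of_isotropic_of_zero hr h0 hk

lemma dotProduct_snoc_of_isotropic_of_zero (hr : Hform d (star r) (star r) = 0) (h0 : r 0 = 0)
    (τ : Fin d → ℂ) : r ⬝ᵥ Fin.snoc τ 1 = r (Fin.last d) := by
  rw [dotProduct_snoc, h0, zero_mul, zero_add, add_eq_left]
  exact Finset.sum_eq_zero fun k hk => by
    rw [eq_zero_of_isotropic_of_zero hr h0 (Finset.ne_of_mem_erase hk), zero_mul]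

lemma re_dotProduct_snoc_mul_conj_neg (hr : Hform d (star r) (star r) = 0) (h0 : r 0 ≠ 0)
    {τ : Fin d → ℂ} (hτ : τ ∈ Hdom d) : ((r ⬝ᵥ Fin.snoc τ 1) * conj (r 0)).re < 0 := by
  have hexpand : ((r ⬝ᵥ Fin.snoc τ 1) * conj (r 0)).re
      = normSq (r 0) * (τ 0).re + (r (Fin.last d) * conj (r 0)).re
        + ∑ k ∈ Finset.univ.erase (0 : Fin d), (r k.castSucc * conj (r 0) * τ k).re := by
    rw [dotProduct_snoc, add_mul, add_mul, Finset.sum_mul, add_re, add_re, re_sum,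
      mul_right_comm (r 0), mul_conj, re_ofReal_mul]
    simp only [mul_right_comm _ (τ _)]
  -- the `|r_k|²` produced by AM-GM cancel against `2 Re(r_{d+1} r̄₁)` by isotropy
  have hbound := Finset.sum_le_sum fun k (_ : k ∈ Finset.univ.erase (0 : Fin d)) =>
    two_mul_re_mul_conj_mul_le (r 0) (r k.castSucc) (τ k)
  rw [← Finset.mul_sum, Finset.sum_add_distrib, ← Finset.mul_sum] at hbound
  have hrow := two_mul_re_add_sum_normSq_eq_zero hr
  have hneg := mul_neg_of_pos_of_neg (normSq_pos.mpr h0) (mem_Hdom_iff.mp hτ)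
  rw [hexpand]
  nlinarith

end IsotropicRow

section FormPreserving

variable {d : ℕ} [NeZero d] {g : Matrix (Fin (d+1)) (Fin (d+1)) ℂ} {τ : Fin d → ℂ}

lemma mul_Jmat_conjTranspose_Jmat (hg : gᴴ * Jmat d * g = Jmat d) :
    g * (Jmat d * gᴴ * Jmat d) = 1 :=
  mul_eq_one_comm.mp <| by
    rw [Matrix.mul_assoc, Matrix.mul_assoc, ← Matrix.mul_assoc gᴴ, hg, Jmat_mul_self]

lemma mul_Jmat_mul_conjTranspose (hg : gᴴ * Jmat d * g = Jmat d) :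
    g * Jmat d * gᴴ = Jmat d := by
  calc g * Jmat d * gᴴ = g * (Jmat d * gᴴ * Jmat d) * Jmat d := by
        simp only [Matrix.mul_assoc, Jmat_mul_self, Matrix.mul_one]
    _ = Jmat d := by rw [mul_Jmat_conjTranspose_Jmat hg, Matrix.one_mul]

lemma lastRow_ne_zero (hg : gᴴ * Jmat d * g = Jmat d) : g (Fin.last d) ≠ 0 := fun h0 =>
  det_ne_zero_of_right_inverse (mul_Jmat_conjTranspose_Jmat hg)
    (det_eq_zero_of_row_eq_zero _ (congrFun h0))

lemma Hform_star_lastRow_eq_zero (hg : gᴴ * Jmat d * g = Jmat d) :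
    Hform d (star (g (Fin.last d))) (star (g (Fin.last d))) = 0 := by
  have h := congrFun (congrFun (mul_Jmat_mul_conjTranspose hg) (Fin.last d)) (Fin.last d)
  have hJ : Jmat d (Fin.last d) (Fin.last d) = 0 := by simp [Jmat, NeZero.ne d]
  rw [hJ, Matrix.mul_apply] at h
  rw [Hform, star_star, dotProduct_mulVec, ← h]
  rfl

lemma re_jfun_div_Xfun_pos (hg : gᴴ * Jmat d * g = Jmat d) (hτ : τ ∈ Hdom d) :
    0 < (jfun d g τ / Xfun d g).re := by
  have hr := Hform_star_lastRow_eq_zero hg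
  change 0 < ((g (Fin.last d) ⬝ᵥ Fin.snoc τ 1) / Xfun d g).re
  by_cases h0 : g (Fin.last d) 0 = 0
  · rw [Xfun, if_pos h0, dotProduct_snoc_of_isotropic_of_zero hr h0,
      div_self (last_ne_zero_of_isotropic_of_zero hr h0 (lastRow_ne_zero hg)), one_re]
    exact one_pos
  · rw [Xfun, if_neg h0]
    refine re_div_pos_of_re_mul_conj_pos (neg_ne_zero.mpr h0) ?_
    rw [map_neg, mul_neg, neg_re, neg_pos]
    exact re_dotProduct_snoc_mul_conj_neg hr h0 hτ

lemma jfun_ne_zero (hg : gᴴ * Jmat d * g = Jmat d) (hτ : τ ∈ Hdom d) : jfun d g τ ≠ 0 := by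
  intro hj
  simpa [hj] using re_jfun_div_Xfun_pos hg hτ

lemma Xfun_ne_zero (hg : gᴴ * Jmat d * g = Jmat d) : Xfun d g ≠ 0 := by
  intro hX
  simpa [hX] using re_jfun_div_Xfun_pos hg baseTau_mem_Hdom

lemma exp_jtilde (hg : gᴴ * Jmat d * g = Jmat d) (hτ : τ ∈ Hdom d) :
    exp (jtilde d g τ) = jfun d g τ := by
  rw [jtilde, exp_add, exp_log (Xfun_ne_zero hg),
    exp_log (div_ne_zero (jfun_ne_zero hg hτ) (Xfun_ne_zero hg)),
    div_mul_cancel₀ _ (Xfun_ne_zero hg)]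

lemma actH_mem_Hdom (hg : gᴴ * Jmat d * g = Jmat d) (hτ : τ ∈ Hdom d) :
    actH d g τ ∈ Hdom d := by
  have hτ' : Hform d (Fin.snoc τ 1) (Fin.snoc τ 1) < 0 := hτ
  rw [← Hform_mulVec hg, mulVec_snoc_eq_smul (jfun_ne_zero hg hτ), Hform_smul,
    ← normSq_eq_conj_mul_self, Hform_self, ← ofReal_mul] at hτ'
  change Hform d _ _ < 0
  rw [Hform_self]
  exact_mod_cast neg_of_mul_neg_right (by exact_mod_cast hτ') (normSq_nonneg _)

lemma continuousOn_actH (hg : gᴴ * Jmat d * g = Jmat d) : ContinuousOn (actH d g) (Hdom d) := by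
  refine continuousOn_pi.mpr fun k => ContinuousOn.div ?_ (continuous_jfun g).continuousOn
    fun _ hτ => jfun_ne_zero hg hτ
  fun_prop

lemma continuousOn_jtilde (hg : gᴴ * Jmat d * g = Jmat d) :
    ContinuousOn (jtilde d g) (Hdom d) :=
  ContinuousOn.add (fun _ hτ =>
    ContinuousAt.comp_continuousWithinAt (f := fun τ => jfun d g τ / Xfun d g)
      (continuousAt_clog (mem_slitPlane_iff.mpr (Or.inl (re_jfun_div_Xfun_pos hg hτ))))
      ((continuous_jfun g).div_const _).continuousWithinAt)
    continuousOn_const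

end FormPreserving

def logCocycle (d : ℕ) (g h : Matrix (Fin (d+1)) (Fin (d+1)) ℂ) (τ : Fin d → ℂ) : ℂ :=
  jtilde d (g * h) τ - jtilde d g (actH d h τ) - jtilde d h τ

section LogCocycle

variable {d : ℕ} {g h k : Matrix (Fin (d+1)) (Fin (d+1)) ℂ} {τ : Fin d → ℂ}

lemma logCocycle_add_logCocycle (hact : actH d (h * k) τ = actH d h (actH d k τ)) :
    logCocycle d g h (actH d k τ) + logCocycle d (g * h) k τ
      = logCocycle d g (h * k) τ + logCocycle d h k τ := by
  simp only [logCocycle, hact, Matrix.mul_assoc]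
  ring

variable [NeZero d]

lemma exp_logCocycle (hg : gᴴ * Jmat d * g = Jmat d) (hh : hᴴ * Jmat d * h = Jmat d)
    (hτ : τ ∈ Hdom d) : exp (logCocycle d g h τ) = 1 := by
  rw [logCocycle, exp_sub, exp_sub, exp_jtilde (mul_preserves_Jmat hg hh) hτ,
    exp_jtilde hg (actH_mem_Hdom hh hτ), exp_jtilde hh hτ, jfun_mul (jfun_ne_zero hh hτ), div_div,
    div_self (mul_ne_zero (jfun_ne_zero hg (actH_mem_Hdom hh hτ)) (jfun_ne_zero hh hτ))]

lemma continuousOn_logCocycle (hg : gᴴ * Jmat d * g = Jmat d) (hh : hᴴ * Jmat d * h = Jmat d) :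
    ContinuousOn (logCocycle d g h) (Hdom d) :=
  ((continuousOn_jtilde (mul_preserves_Jmat hg hh)).sub
    ((continuousOn_jtilde hg).comp (continuousOn_actH hh) fun _ hτ => actH_mem_Hdom hh hτ)).sub
    (continuousOn_jtilde hh)

lemma logCocycle_eq_sigmaZ_mul (hg : gᴴ * Jmat d * g = Jmat d) (hh : hᴴ * Jmat d * h = Jmat d)
    (hτ : τ ∈ Hdom d) : logCocycle d g h τ = sigmaZ d g h * (2 * π * I) := by
  set f : (Fin d → ℂ) → ℂ := fun τ => logCocycle d g h τ / (2 * π * I)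
  have hint : Set.MapsTo f (Hdom d) (Set.range ((↑) : ℤ → ℂ)) := fun τ hτ => by
    obtain ⟨n, hn⟩ := Complex.exp_eq_one_iff.mp (exp_logCocycle hg hh hτ)
    exact ⟨n, by simp only [f]; rw [hn, mul_div_cancel_right₀ _ two_pi_I_ne_zero]⟩
  have hconst : f τ = f (baseTau d) :=
    convex_Hdom.isPreconnected.constant_of_mapsTo isometry_intCast.isEmbedding.isDiscrete_range
      ((continuousOn_logCocycle hg hh).div_const _) hint hτ baseTau_mem_Hdom
  obtain ⟨n, hn⟩ := hint baseTau_mem_Hdom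
  have hσ : sigmaZ d g h = n := by
    rw [sigmaZ, show sigmaC d g h = f (baseTau d) from rfl, ← hn, intCast_re, round_intCast]
  rw [← div_eq_iff two_pi_I_ne_zero, hσ]
  exact hconst.trans hn.symm

end LogCocycle

/-- For `g,h ∈ SU(d,1)`, the quantity
`(1/(2πi))(j̃(gh,τ) − j̃(g,h*τ) − j̃(h,τ))` is an integer (namely `σ(g,h)`) independent of
the choice of `τ ∈ ℋ`, and `σ` satisfies the inhomogeneous 2-cocycle identity. -/
theorem statement6 (d : ℕ) (hd : 2 ≤ d) (g h k : SLC (d+1))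
    (hg : g ∈ SUd1 d) (hh : h ∈ SUd1 d) (hk : k ∈ SUd1 d) :
    (∀ τ ∈ Hdom d,
      (jtilde d ((↑g : Matrix (Fin (d+1)) (Fin (d+1)) ℂ) * (↑h : Matrix (Fin (d+1)) (Fin (d+1)) ℂ)) τ
          - jtilde d (↑g) (actH d (↑h) τ) - jtilde d (↑h) τ) / (2 * Real.pi * Complex.I)
        = (sigmaZ d (↑g) (↑h) : ℂ)) ∧
    sigmaZ d (↑g) (↑h) + sigmaZ d ((↑g : Matrix (Fin (d+1)) (Fin (d+1)) ℂ) * (↑h : Matrix (Fin (d+1)) (Fin (d+1)) ℂ)) (↑k)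
      = sigmaZ d (↑g) ((↑h : Matrix (Fin (d+1)) (Fin (d+1)) ℂ) * (↑k : Matrix (Fin (d+1)) (Fin (d+1)) ℂ))
          + sigmaZ d (↑h) (↑k) := by
  have : NeZero d := ⟨by omega⟩
  have hgh := mul_preserves_Jmat hg hh
  have hhk := mul_preserves_Jmat hh hk
  have hτ₀ : baseTau d ∈ Hdom d := baseTau_mem_Hdom
  have hkτ₀ := actH_mem_Hdom hk hτ₀
  refine ⟨fun τ hτ => (div_eq_iff two_pi_I_ne_zero).mpr (logCocycle_eq_sigmaZ_mul hg hh hτ),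
    ?_⟩
  have hsum := logCocycle_add_logCocycle (g := (g : Matrix (Fin (d+1)) (Fin (d+1)) ℂ))
    (actH_mul (g := (h : Matrix (Fin (d+1)) (Fin (d+1)) ℂ)) (jfun_ne_zero hk hτ₀))
  rw [logCocycle_eq_sigmaZ_mul hg hh hkτ₀, logCocycle_eq_sigmaZ_mul hgh hk hτ₀,
    logCocycle_eq_sigmaZ_mul hg hhk hτ₀, logCocycle_eq_sigmaZ_mul hh hk hτ₀,
    ← add_mul, ← add_mul, mul_left_inj' two_pi_I_ne_zero] at hsum
  exact_mod_cast hsum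
end
end

section
/- Assume d ≥ 2. For z ∈ ℂ with |z| = 1, let t_z = diag(z, z̄², 1, …, 1, z) ∈ SU(d,1). Then j̃(t_z, τ) = Log z for all τ ∈ ℋ, and consequently σ(t_z, t_{z'}) = (1/(2πi))(Log(zz') − Log z − Log z'). Moreover the map Ψ defined by Ψ(z,n) = (1/(2πi))Log z − n is a group isomorphism from the set {(z,n) : z ∈ ℂ, |z| = 1, n ∈ ℤ} with multiplication (z,n)·(z',n') = (zz', n + n' + σ(t_z,t_{z'})) onto the additive group of real numbers ℝ. -/
/-! The torus element `t_z` is diagonal with last entry `z`, so `j(t_z, τ) = X(t_z) = z` and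
`j̃(t_z, τ) = Log z`. As `t_z t_{z'} = t_{zz'}`, the cocycle `σ(t_z, t_{z'})` is the integer
`(Log(zz') − Log z − Log z')/(2πi)`, which is exactly the correction making `Ψ` multiplicative.
On the unit circle `Log z/(2πi) = arg z/(2π) ∈ (-1/2, 1/2]`, so `Ψ(z, n)` determines `n` as
`⌊1/2 − Ψ(z, n)⌋` and then `z` by its argument; this gives bijectivity. -/

open Matrix Complex
open scoped ComplexOrder

noncomputable section

/-- The diagonal torus element `t_z = diag(z, z̄², 1, …, 1, z)` of `SU(d,1)`. -/
def tzmat (d : ℕ) (z : ℂ) : Matrix (Fin (d+1)) (Fin (d+1)) ℂ :=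
  Matrix.diagonal fun i =>
    if i = 0 then z
    else if (i : ℕ) = 1 then (starRingEnd ℂ z) ^ 2
    else if i = Fin.last d then z else 1

/-- The map `Ψ(z,n) = (1/(2πi)) Log z − n` from the `σ`-twisted product
`{z : |z|=1} × ℤ` to `ℝ`. -/
def PsiMap (p : {w : ℂ // ‖w‖ = 1} × ℤ) : ℝ :=
  (Complex.log ↑p.1 / (2 * Real.pi * Complex.I)).re - p.2

open scoped Real

lemma jfun_diagonal (d : ℕ) (v : Fin (d+1) → ℂ) (τ : Fin d → ℂ) :
    jfun d (diagonal v) τ = v (Fin.last d) := by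
  simp [jfun, mulVec_diagonal]

lemma Xfun_diagonal {d : ℕ} (hd : d ≠ 0) (v : Fin (d+1) → ℂ) :
    Xfun d (diagonal v) = v (Fin.last d) := by
  have : (Fin.last d : Fin (d+1)) ≠ 0 := by simpa [Fin.ext_iff] using hd
  simp [Xfun, this]

lemma jtilde_diagonal {d : ℕ} (hd : d ≠ 0) {v : Fin (d+1) → ℂ} (hv : v (Fin.last d) ≠ 0)
    (τ : Fin d → ℂ) : jtilde d (diagonal v) τ = log (v (Fin.last d)) := by
  rw [jtilde, jfun_diagonal, Xfun_diagonal hd, div_self hv, log_one, zero_add]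

lemma jtilde_tzmat {d : ℕ} (hd : 2 ≤ d) {z : ℂ} (hz : z ≠ 0) (τ : Fin d → ℂ) :
    jtilde d (tzmat d z) τ = log z := by
  have hlast : (Fin.last d : Fin (d+1)) ≠ 0 := by simp [Fin.ext_iff]; omega
  have hd_ne_one : d ≠ 1 := by omega
  rw [tzmat, jtilde_diagonal (by omega)] <;> simp [hlast, hd_ne_one, hz]

lemma tzmat_mul (d : ℕ) (z z' : ℂ) : tzmat d z * tzmat d z' = tzmat d (z * z') := by
  rw [tzmat, tzmat, tzmat, diagonal_mul_diagonal]
  congr 1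
  ext i
  split_ifs <;> simp [mul_pow]

lemma exists_log_mul_sub_log_sub_log {z z' : ℂ} (hz : z ≠ 0) (hz' : z' ≠ 0) :
    ∃ k : ℤ, log (z * z') - log z - log z' = k * (2 * π * I) := by
  rw [← exp_eq_one_iff, exp_sub, exp_sub, exp_log hz, exp_log hz', exp_log (mul_ne_zero hz hz')]
  field_simp

lemma sigmaZ_tzmat {d : ℕ} (hd : 2 ≤ d) {z z' : ℂ} (hz : z ≠ 0) (hz' : z' ≠ 0) :
    (sigmaZ d (tzmat d z) (tzmat d z') : ℂ)
      = (log (z * z') - log z - log z') / (2 * π * I) := by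
  obtain ⟨k, hk⟩ := exists_log_mul_sub_log_sub_log hz hz'
  have hC : sigmaC d (tzmat d z) (tzmat d z') = k := by
    rw [sigmaC, tzmat_mul, jtilde_tzmat hd (mul_ne_zero hz hz'), jtilde_tzmat hd hz,
      jtilde_tzmat hd hz', hk, mul_div_cancel_right₀ _ two_pi_I_ne_zero]
  rw [sigmaZ, hC, hk, mul_div_cancel_right₀ _ two_pi_I_ne_zero]
  simp

lemma log_div_two_pi_I_of_norm_eq_one {w : ℂ} (hw : ‖w‖ = 1) :
    log w / (2 * π * I) = ((arg w / (2 * π) : ℝ) : ℂ) := by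
  have hπ : (π : ℂ) ≠ 0 := ofReal_ne_zero.mpr Real.pi_ne_zero
  rw [log, hw, Real.log_one, ofReal_zero, zero_add]
  push_cast
  field_simp

lemma PsiMap_eq (w : {w : ℂ // ‖w‖ = 1}) (n : ℤ) :
    PsiMap (w, n) = arg w / (2 * π) - n := by
  rw [PsiMap, log_div_two_pi_I_of_norm_eq_one w.2, ofReal_re]

lemma arg_div_two_pi_mem_Ioc (z : ℂ) : arg z / (2 * π) ∈ Set.Ioc (-(1 / 2)) (1 / 2) := by
  obtain ⟨hlo, hhi⟩ := arg_mem_Ioc z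
  have h2π : 0 < 2 * π := by positivity
  constructor
  · rw [lt_div_iff₀ h2π]; linarith
  · rw [div_le_iff₀ h2π]; linarith

lemma floor_half_sub_PsiMap (w : {w : ℂ // ‖w‖ = 1}) (n : ℤ) :
    ⌊1 / 2 - PsiMap (w, n)⌋ = n := by
  obtain ⟨hlo, hhi⟩ := arg_div_two_pi_mem_Ioc w
  have h0 : ⌊1 / 2 - arg w / (2 * π)⌋ = 0 := by
    rw [Int.floor_eq_zero_iff]; constructor <;> linarith
  rw [PsiMap_eq, show 1 / 2 - (arg w / (2 * π) - n) = 1 / 2 - arg w / (2 * π) + n by ring,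
    Int.floor_add_intCast, h0, zero_add]

lemma PsiMap_injective : Function.Injective PsiMap := by
  rintro ⟨w, n⟩ ⟨w', n'⟩ h
  have hn : n = n' := by rw [← floor_half_sub_PsiMap w n, h, floor_half_sub_PsiMap]
  subst hn
  have harg : arg w = arg w' := by
    rwa [PsiMap_eq, PsiMap_eq, sub_left_inj, div_left_inj' (by positivity)] at h
  have hw : (w : ℂ) = w' := by
    rw [← norm_mul_exp_arg_mul_I (w : ℂ), ← norm_mul_exp_arg_mul_I (w' : ℂ), w.2, w'.2, harg]
  rw [Subtype.ext hw]

lemma PsiMap_surjective : Function.Surjective PsiMap := by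
  intro r
  set n := ⌊1 / 2 - r⌋
  have hθ : 2 * π * (r + n) ∈ Set.Ioc (-π) (-π + 2 * π) := by
    obtain ⟨hlo, hhi⟩ := Int.floor_eq_iff.mp (rfl : ⌊1 / 2 - r⌋ = n)
    constructor <;> nlinarith [Real.pi_pos]
  refine ⟨(⟨exp ((2 * π * (r + n) : ℝ) * I), norm_exp_ofReal_mul_I _⟩, n), ?_⟩
  rw [PsiMap_eq, arg_exp_mul_I, (toIocMod_eq_self _).mpr hθ]
  field_simp
  ring

lemma PsiMap_twisted_mul {z z' : {w : ℂ // ‖w‖ = 1}} {m : ℤ}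
    (hm : (m : ℂ) = (log (z * z') - log z - log z') / (2 * π * I)) (n n' : ℤ) :
    PsiMap (⟨z * z', by rw [norm_mul, z.2, z'.2, mul_one]⟩, n + n' + m)
      = PsiMap (z, n) + PsiMap (z', n') := by
  have hlog : log (z * z') / (2 * π * I) = log z / (2 * π * I) + log z' / (2 * π * I) + m := by
    rw [hm]; ring
  simp only [PsiMap]
  rw [hlog, add_re, add_re, intCast_re]
  push_cast
  ring

/-- For `|z| = 1`, `j̃(t_z,τ) = Log z` for every `τ ∈ ℋ`, hence
`σ(t_z,t_{z'}) = (1/(2πi))(Log(zz') − Log z − Log z')`; and `Ψ(z,n) = (1/(2πi))Log z − n`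
is a group isomorphism (a multiplicative bijection) from `{(z,n) : |z| = 1, n ∈ ℤ}` with the
`σ`-twisted multiplication onto the additive group `ℝ`. -/
theorem statement7 (d : ℕ) (hd : 2 ≤ d) :
    (∀ z : ℂ, ‖z‖ = 1 → ∀ τ ∈ Hdom d, jtilde d (tzmat d z) τ = Complex.log z) ∧
    (∀ z z' : ℂ, ‖z‖ = 1 → ‖z'‖ = 1 →
      (sigmaZ d (tzmat d z) (tzmat d z') : ℂ)
        = (Complex.log (z * z') - Complex.log z - Complex.log z')
            / (2 * Real.pi * Complex.I)) ∧
    (∀ (z z' : {w : ℂ // ‖w‖ = 1}) (n n' : ℤ),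
      PsiMap (⟨↑z * ↑z', by rw [norm_mul, z.2, z'.2, mul_one]⟩,
          n + n' + sigmaZ d (tzmat d ↑z) (tzmat d ↑z'))
        = PsiMap (z, n) + PsiMap (z', n')) ∧
    Function.Bijective PsiMap := by
  have ne_zero_of_norm_eq_one {w : ℂ} (hw : ‖w‖ = 1) : w ≠ 0 :=
    ne_zero_of_norm_ne_zero (by rw [hw]; exact one_ne_zero)
  refine ⟨fun z hz τ _ => jtilde_tzmat hd (ne_zero_of_norm_eq_one hz) τ,
    fun z z' hz hz' => sigmaZ_tzmat hd (ne_zero_of_norm_eq_one hz) (ne_zero_of_norm_eq_one hz'),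
    fun z z' => PsiMap_twisted_mul
      (sigmaZ_tzmat hd (ne_zero_of_norm_eq_one z.2) (ne_zero_of_norm_eq_one z'.2)),
    PsiMap_injective, PsiMap_surjective⟩

end
end

section
/- The principal congruence subgroup Γ(√-3) is the internal direct product of Υ and the central subgroup μ₃ = {I₃, ζI₃, ζ²I₃}: μ₃ ⊆ Γ(√-3), Υ is a subgroup of index 3 in Γ(√-3), Υ ∩ μ₃ = {I₃}, and every element of Γ(√-3) can be written uniquely as u·c with u ∈ Υ and c ∈ μ₃. -/
open Matrix Complex
open scoped ComplexOrder

noncomputable section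

/-- The primitive cube root of unity `ζ = e^{2πi/3}`. -/
def zeta3 : ℂ := Complex.exp (2 * Real.pi * Complex.I / 3)

lemma zeta3_pow_three : zeta3 ^ 3 = 1 := by
  rw [zeta3, ← Complex.exp_nat_mul]
  rw [show (3 : ℕ) * (2 * ↑Real.pi * Complex.I / 3) = 2 * ↑Real.pi * Complex.I by
    push_cast; ring]
  exact Complex.exp_two_pi_mul_I

lemma zeta3_ne_one : zeta3 ≠ 1 := by
  have him : zeta3.im = Real.sin (2 * Real.pi / 3) := by
    rw [zeta3, show 2 * (Real.pi : ℂ) * Complex.I / 3 = (2 * Real.pi / 3 : ℝ) * Complex.I by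
      push_cast; ring]
    rw [Complex.exp_ofReal_mul_I_im]
  have hpos : 0 < Real.sin (2 * Real.pi / 3) := by
    apply Real.sin_pos_of_pos_of_lt_pi
    · positivity
    · nlinarith [Real.pi_pos]
  intro h
  rw [h] at him
  simp only [Complex.one_im] at him
  linarith

lemma zeta3_quad : zeta3 ^ 2 + zeta3 + 1 = 0 := by
  have h : (zeta3 - 1) * (zeta3 ^ 2 + zeta3 + 1) = 0 := by
    have : (zeta3 - 1) * (zeta3 ^ 2 + zeta3 + 1) = zeta3 ^ 3 - 1 := by ring
    rw [this, zeta3_pow_three, sub_self]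
  rcases mul_eq_zero.mp h with h1 | h2
  · exact absurd (sub_eq_zero.mp h1) zeta3_ne_one
  · exact h2

lemma zeta3_conj : starRingEnd ℂ zeta3 = zeta3 ^ 2 := by
  have habs : ‖zeta3‖ = 1 := by
    rw [zeta3, show 2 * (Real.pi : ℂ) * Complex.I / 3 = (2 * Real.pi / 3 : ℝ) * Complex.I by
      push_cast; ring]
    exact Complex.norm_exp_ofReal_mul_I _
  have h1 : starRingEnd ℂ zeta3 * zeta3 = 1 := by
    rw [mul_comm, Complex.mul_conj, Complex.normSq_eq_norm_sq, habs]; norm_num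
  have h2 : zeta3 ^ 2 * zeta3 = 1 := by
    rw [← pow_succ, zeta3_pow_three]
  have hz : zeta3 ≠ 0 := by
    intro h
    rw [h] at habs; simp at habs
  exact mul_right_cancel₀ hz (h1.trans h2.symm)

/-- The ring of Eisenstein integers `ℤ[ζ]`, as a subring of `ℂ`. -/
def Eis : Subring ℂ := Subring.closure {zeta3}

lemma zeta3_mem_Eis : zeta3 ∈ Eis := Subring.subset_closure rfl

lemma Eis_conj_mem {x : ℂ} (hx : x ∈ Eis) : starRingEnd ℂ x ∈ Eis := by
  induction hx using Subring.closure_induction with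
  | mem y hy =>
      rcases hy with rfl
      rw [zeta3_conj]
      exact pow_mem zeta3_mem_Eis 2
  | zero => simpa using Eis.zero_mem
  | one => simpa using Eis.one_mem
  | add a b _ _ ha hb => rw [map_add]; exact Eis.add_mem ha hb
  | neg a _ ha => rw [map_neg]; exact Eis.neg_mem ha
  | mul a b _ _ ha hb => rw [_root_.map_mul]; exact Eis.mul_mem ha hb

/-- The square root `√-3 = 2ζ + 1` of `-3` in `ℤ[ζ]`. -/
def sqrt3 : ℂ := 2 * zeta3 + 1

lemma sqrt3_mem_Eis : sqrt3 ∈ Eis := by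
  refine Eis.add_mem (Eis.mul_mem ?_ zeta3_mem_Eis) Eis.one_mem
  rw [show (2 : ℂ) = 1 + 1 by norm_num]
  exact Eis.add_mem Eis.one_mem Eis.one_mem

lemma sqrt3_sq : sqrt3 * sqrt3 = -3 := by
  have h := zeta3_quad
  rw [sqrt3]; ring_nf; linear_combination 4 * h
/-- The set of multiples of `c` by Eisenstein integers (e.g. the ideal `√-3·ℤ[ζ]` of `ℤ[ζ]`,
viewed inside `ℂ`). -/
def mulSet (c : ℂ) : Set ℂ := {x | ∃ y ∈ Eis, x = c * y}

lemma mulSet_zero (c : ℂ) : (0 : ℂ) ∈ mulSet c := ⟨0, Eis.zero_mem, by ring⟩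

lemma mulSet_add {c x y : ℂ} (hx : x ∈ mulSet c) (hy : y ∈ mulSet c) :
    x + y ∈ mulSet c := by
  obtain ⟨a, ha, rfl⟩ := hx; obtain ⟨b, hb, rfl⟩ := hy
  exact ⟨a + b, Eis.add_mem ha hb, by ring⟩

lemma mulSet_neg {c x : ℂ} (hx : x ∈ mulSet c) : -x ∈ mulSet c := by
  obtain ⟨a, ha, rfl⟩ := hx
  exact ⟨-a, Eis.neg_mem ha, by ring⟩

lemma mulSet_mul_left {c x y : ℂ} (hx : x ∈ Eis) (hy : y ∈ mulSet c) :
    x * y ∈ mulSet c := by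
  obtain ⟨a, ha, rfl⟩ := hy
  exact ⟨x * a, Eis.mul_mem hx ha, by ring⟩

lemma mulSet_mul_right {c x y : ℂ} (hx : x ∈ mulSet c) (hy : y ∈ Eis) :
    x * y ∈ mulSet c := by
  obtain ⟨a, ha, rfl⟩ := hx
  exact ⟨a * y, Eis.mul_mem ha hy, by ring⟩

lemma sqrt3_mul_sqrt3 {x y : ℂ} (hx : x ∈ mulSet sqrt3) (hy : y ∈ mulSet sqrt3) :
    x * y ∈ mulSet 3 := by
  obtain ⟨a, ha, rfl⟩ := hx; obtain ⟨b, hb, rfl⟩ := hy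
  refine ⟨-(a * b), Eis.neg_mem (Eis.mul_mem ha hb), ?_⟩
  have h := sqrt3_sq
  linear_combination a * b * h

lemma three_subset_sqrt3 {x : ℂ} (hx : x ∈ mulSet 3) : x ∈ mulSet sqrt3 := by
  obtain ⟨a, ha, rfl⟩ := hx
  refine ⟨-(sqrt3 * a), Eis.neg_mem (Eis.mul_mem sqrt3_mem_Eis ha), ?_⟩
  have h := sqrt3_sq
  linear_combination a * h

lemma Jmat2_entries_mem : ∀ i j, Jmat 2 i j ∈ Eis := by
  intro i j
  rw [Jmat]
  dsimp only [Matrix.of_apply]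
  split_ifs <;> first | exact Eis.one_mem | exact Eis.zero_mem

lemma entries_mul_mem {A B : Matrix (Fin 3) (Fin 3) ℂ}
    (hA : ∀ i j, A i j ∈ Eis) (hB : ∀ i j, B i j ∈ Eis) :
    ∀ i j, (A * B) i j ∈ Eis := by
  intro i j
  rw [Matrix.mul_apply]
  exact Subring.sum_mem _ fun k _ => Eis.mul_mem (hA i k) (hB k j)

lemma Jmat2_mul_self : Jmat 2 * Jmat 2 = 1 := by
  ext i j
  rw [Matrix.mul_apply, Fin.sum_univ_three]
  fin_cases i <;> fin_cases j <;>
    simp [Jmat, Matrix.one_apply, Fin.last]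

/-- The group `Γ = {g ∈ SL₃(ℤ[ζ]) : conj(g)ᵀ J g = J}`, a subgroup of `SU(2,1)`. -/
def GammaEis : Subgroup (SLC 3) where
  carrier := {g | (∀ i j, (↑g : Matrix (Fin 3) (Fin 3) ℂ) i j ∈ Eis) ∧
    (↑g : Matrix (Fin 3) (Fin 3) ℂ)ᴴ * Jmat 2 * ↑g = Jmat 2}
  one_mem' := by
    constructor
    · intro i j
      rw [Matrix.SpecialLinearGroup.coe_one, Matrix.one_apply]
      split_ifs <;> first | exact Eis.one_mem | exact Eis.zero_mem
    · simp
  mul_mem' := by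
    intro a b ha hb
    obtain ⟨ha1, ha2⟩ := ha; obtain ⟨hb1, hb2⟩ := hb
    constructor
    · intro i j
      rw [Matrix.SpecialLinearGroup.coe_mul]
      exact entries_mul_mem ha1 hb1 i j
    · rw [Matrix.SpecialLinearGroup.coe_mul, Matrix.conjTranspose_mul]
      calc (↑b)ᴴ * (↑a)ᴴ * Jmat 2 * ((↑a : Matrix (Fin 3) (Fin 3) ℂ) * ↑b)
          = (↑b)ᴴ * ((↑a : Matrix (Fin 3) (Fin 3) ℂ)ᴴ * Jmat 2 * ↑a) * ↑b := by
            simp only [Matrix.mul_assoc]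
        _ = Jmat 2 := by rw [ha2]; exact hb2
  inv_mem' := by
    intro a ha
    obtain ⟨ha1, ha2⟩ := ha
    set A : Matrix (Fin 3) (Fin 3) ℂ := ↑a with hA
    set B : Matrix (Fin 3) (Fin 3) ℂ := ↑(a⁻¹) with hB
    have hAB : A * B = 1 := by
      rw [hA, hB, ← Matrix.SpecialLinearGroup.coe_mul, mul_inv_cancel]; simp
    have hJJ := Jmat2_mul_self
    have hform : B = Jmat 2 * Aᴴ * Jmat 2 := by
      have h1 : (Jmat 2 * Aᴴ * Jmat 2) * A = 1 := by
        calc (Jmat 2 * Aᴴ * Jmat 2) * A = Jmat 2 * (Aᴴ * Jmat 2 * A) := by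
              simp only [Matrix.mul_assoc]
          _ = Jmat 2 * Jmat 2 := by rw [ha2]
          _ = 1 := hJJ
      calc B = 1 * B := (Matrix.one_mul _).symm
        _ = ((Jmat 2 * Aᴴ * Jmat 2) * A) * B := by rw [h1]
        _ = (Jmat 2 * Aᴴ * Jmat 2) * (A * B) := by simp only [Matrix.mul_assoc]
        _ = Jmat 2 * Aᴴ * Jmat 2 := by rw [hAB, Matrix.mul_one]
    have hAH : ∀ i j, Aᴴ i j ∈ Eis := by
      intro i j
      rw [Matrix.conjTranspose_apply]
      exact Eis_conj_mem (ha1 j i)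
    have hBent : ∀ i j, B i j ∈ Eis := by
      rw [hform]
      exact entries_mul_mem (entries_mul_mem Jmat2_entries_mem hAH) Jmat2_entries_mem
    constructor
    · exact hBent
    · calc Bᴴ * Jmat 2 * B
          = Bᴴ * (Aᴴ * Jmat 2 * A) * B := by rw [ha2]
        _ = (A * B)ᴴ * Jmat 2 * (A * B) := by
            rw [Matrix.conjTranspose_mul]; simp only [Matrix.mul_assoc]
        _ = Jmat 2 := by rw [hAB]; simp
/-- The principal congruence subgroup `Γ(√-3)` of level `√-3` in `GammaEis`. -/
def GammaS3 : Subgroup (SLC 3) where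
  carrier := {g | g ∈ GammaEis ∧
    ∀ i j, ((↑g : Matrix (Fin 3) (Fin 3) ℂ) i j - (1 : Matrix (Fin 3) (Fin 3) ℂ) i j)
      ∈ mulSet sqrt3}
  one_mem' := ⟨GammaEis.one_mem, by intro i j; simp [mulSet_zero]⟩
  mul_mem' := by
    intro a b ha hb
    refine ⟨GammaEis.mul_mem ha.1 hb.1, ?_⟩
    intro i j
    set A : Matrix (Fin 3) (Fin 3) ℂ := ↑a with hA
    set B : Matrix (Fin 3) (Fin 3) ℂ := ↑b with hB
    have key : A * B - 1 = (A - 1) * (B - 1) + (A - 1) + (B - 1) := by noncomm_ring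
    have : ((↑(a * b) : Matrix (Fin 3) (Fin 3) ℂ) i j - (1 : Matrix (Fin 3) (Fin 3) ℂ) i j)
        = ((A - 1) * (B - 1)) i j + (A - 1) i j + (B - 1) i j := by
      rw [Matrix.SpecialLinearGroup.coe_mul, ← Matrix.sub_apply, key]
      simp [Matrix.add_apply]
    rw [this]
    have hprod : ((A - 1) * (B - 1)) i j ∈ mulSet sqrt3 := by
      rw [Matrix.mul_apply]
      refine Finset.sum_induction _ _ (fun x y hx hy => mulSet_add hx hy) (mulSet_zero _) ?_
      intro k _
      refine three_subset_sqrt3 (sqrt3_mul_sqrt3 ?_ ?_)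
      · simpa [Matrix.sub_apply] using ha.2 i k
      · simpa [Matrix.sub_apply] using hb.2 k j
    refine mulSet_add (mulSet_add hprod ?_) ?_
    · simpa [Matrix.sub_apply] using ha.2 i j
    · simpa [Matrix.sub_apply] using hb.2 i j
  inv_mem' := by
    intro a ha
    refine ⟨GammaEis.inv_mem ha.1, ?_⟩
    intro i j
    set A : Matrix (Fin 3) (Fin 3) ℂ := ↑a with hA
    set B : Matrix (Fin 3) (Fin 3) ℂ := ↑(a⁻¹) with hB
    have hBA : B * A = 1 := by
      rw [hA, hB, ← Matrix.SpecialLinearGroup.coe_mul, inv_mul_cancel]; simp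
    have key : B - 1 = B * (1 - A) := by rw [Matrix.mul_sub, Matrix.mul_one, hBA]
    have hBent : ∀ i j, B i j ∈ Eis := ((GammaEis.inv_mem ha.1).1 : _)
    have : (B i j - (1 : Matrix (Fin 3) (Fin 3) ℂ) i j) = (B * (1 - A)) i j := by
      rw [← key]; simp [Matrix.sub_apply]
    rw [this, Matrix.mul_apply]
    refine Finset.sum_induction _ _ (fun x y hx hy => mulSet_add hx hy) (mulSet_zero _) ?_
    intro k _
    refine mulSet_mul_left (hBent i k) ?_
    have : (1 - A) k j = -(A k j - (1 : Matrix (Fin 3) (Fin 3) ℂ) k j) := by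
      simp [Matrix.sub_apply]
    rw [this]
    exact mulSet_neg (ha.2 k j)

/-- The index 3 subgroup `Υ = {g ∈ Γ(√-3) : g₁₁ ≡ 1 mod 3}` of `Γ(√-3)`. -/
def Upsilon : Subgroup (SLC 3) where
  carrier := {g | g ∈ GammaS3 ∧ ((↑g : Matrix (Fin 3) (Fin 3) ℂ) 0 0 - 1) ∈ mulSet 3}
  one_mem' := ⟨GammaS3.one_mem, by simp [mulSet_zero]⟩
  mul_mem' := by
    intro a b ha hb
    refine ⟨GammaS3.mul_mem ha.1 hb.1, ?_⟩
    set A : Matrix (Fin 3) (Fin 3) ℂ := ↑a with hA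
    set B : Matrix (Fin 3) (Fin 3) ℂ := ↑b with hB
    have hAe : ∀ i j, A i j ∈ Eis := ha.1.1.1
    have hBe : ∀ i j, B i j ∈ Eis := hb.1.1.1
    have hoffA : ∀ i j, i ≠ j → A i j ∈ mulSet sqrt3 := by
      intro i j hij
      have := ha.1.2 i j
      simpa [Matrix.one_apply, hij] using this
    have hoffB : ∀ i j, i ≠ j → B i j ∈ mulSet sqrt3 := by
      intro i j hij
      have := hb.1.2 i j
      simpa [Matrix.one_apply, hij] using this
    have hmul : (↑(a * b) : Matrix (Fin 3) (Fin 3) ℂ) 0 0 - 1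
        = (A 0 0 - 1) * (B 0 0 - 1) + (A 0 0 - 1) + (B 0 0 - 1)
          + A 0 1 * B 1 0 + A 0 2 * B 2 0 := by
      rw [Matrix.SpecialLinearGroup.coe_mul, Matrix.mul_apply, Fin.sum_univ_three]
      ring
    rw [hmul]
    refine mulSet_add (mulSet_add (mulSet_add (mulSet_add ?_ ha.2) hb.2) ?_) ?_
    · exact mulSet_mul_right ha.2 (Eis.sub_mem (hBe 0 0) Eis.one_mem)
    · exact sqrt3_mul_sqrt3 (hoffA 0 1 (by decide)) (hoffB 1 0 (by decide))
    · exact sqrt3_mul_sqrt3 (hoffA 0 2 (by decide)) (hoffB 2 0 (by decide))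
  inv_mem' := by
    intro a ha
    have hinv : a⁻¹ ∈ GammaS3 := GammaS3.inv_mem ha.1
    refine ⟨hinv, ?_⟩
    set A : Matrix (Fin 3) (Fin 3) ℂ := ↑a with hA
    set B : Matrix (Fin 3) (Fin 3) ℂ := ↑(a⁻¹) with hB
    have hBA : B * A = 1 := by
      rw [hA, hB, ← Matrix.SpecialLinearGroup.coe_mul, inv_mul_cancel]; simp
    have hBe : ∀ i j, B i j ∈ Eis := hinv.1.1
    have hoffA : ∀ i j, i ≠ j → A i j ∈ mulSet sqrt3 := by
      intro i j hij
      have := ha.1.2 i j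
      simpa [Matrix.one_apply, hij] using this
    have hoffB : ∀ i j, i ≠ j → B i j ∈ mulSet sqrt3 := by
      intro i j hij
      have := hinv.2 i j
      simpa only [Matrix.one_apply, hij, if_false, sub_zero] using this
    have h00 : B 0 0 * A 0 0 + B 0 1 * A 1 0 + B 0 2 * A 2 0 = 1 := by
      have := congrArg (fun M : Matrix (Fin 3) (Fin 3) ℂ => M 0 0) hBA
      simpa [Matrix.mul_apply, Fin.sum_univ_three, Matrix.one_apply] using this
    have key : B 0 0 - 1
        = -(B 0 0 * (A 0 0 - 1)) + -(B 0 1 * A 1 0) + -(B 0 2 * A 2 0) := by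
      linear_combination h00
    rw [key]
    refine mulSet_add (mulSet_add ?_ ?_) ?_
    · exact mulSet_neg (mulSet_mul_left (hBe 0 0) ha.2)
    · exact mulSet_neg (sqrt3_mul_sqrt3 (hoffB 0 1 (by decide)) (hoffA 1 0 (by decide)))
    · exact mulSet_neg (sqrt3_mul_sqrt3 (hoffB 0 2 (by decide)) (hoffA 2 0 (by decide)))
/-- The unipotent upper-triangular matrix `n(z,x)`. -/
def nMat (z : ℂ) (x : ℤ) : Matrix (Fin 3) (Fin 3) ℂ :=
  !![1, sqrt3 * z, (-3 * (z * starRingEnd ℂ z) + (x : ℂ) * sqrt3) / 2;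
     0, 1, sqrt3 * starRingEnd ℂ z;
     0, 0, 1]

/-- `n(z,x)` as an element of `SL₃(ℂ)`. -/
def nSL (z : ℂ) (x : ℤ) : SLC 3 :=
  ⟨nMat z x, by
    simp [nMat, Matrix.det_fin_three, Matrix.vecHead, Matrix.vecTail]⟩

/-- The transpose `n(z,x)ᵀ` as an element of `SL₃(ℂ)`. -/
def ntSL (z : ℂ) (x : ℤ) : SLC 3 :=
  ⟨(nMat z x)ᵀ, by
    rw [Matrix.det_transpose]
    simp [nMat, Matrix.det_fin_three, Matrix.vecHead, Matrix.vecTail]⟩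

/-- The congruence `x ≡ N(z) mod 2` (inside `ℤ[ζ]`). -/
def parityOK (z : ℂ) (x : ℤ) : Prop := ((x : ℂ) - z * starRingEnd ℂ z) ∈ mulSet 2

/-- The generating set of `Υ`: the matrices `n(z,x)` and their transposes, for
`z ∈ ℤ[ζ]` and `x ∈ ℤ` with `x ≡ N(z) mod 2`. -/
def genSet : Set (SLC 3) :=
  {g | ∃ (z : ℂ) (x : ℤ), z ∈ Eis ∧ parityOK z x ∧ (g = nSL z x ∨ g = ntSL z x)}

/-- The scalar matrix `ζ·I₃` as an element of `SL₃(ℂ)`. -/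
def zISL : SLC 3 :=
  ⟨zeta3 • (1 : Matrix (Fin 3) (Fin 3) ℂ), by
    rw [Matrix.det_smul]
    simp [zeta3_pow_three]⟩

/-- The centre `μ₃ = {I₃, ζI₃, ζ²I₃}` of `SU(2,1)`, generated by `ζ·I₃`. -/
def muThree : Subgroup (SLC 3) := Subgroup.zpowers zISL

/-!
The map `g ↦ (1 - g₁₁)/√-3 mod √-3` is a homomorphism from `Γ(√-3)` onto `ℤ[ζ]/(√-3) ≅ ℤ/3`:
the corner entry of `gh` differs from `g₁₁ + h₁₁ - 1` by `((g - 1)(h - 1))₁₁`, a sum of products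
of two multiples of `√-3`, hence a multiple of `3`.
Its kernel is `Υ`, and it sends `ζI₃` to `1` because `(1 - ζ)/√-3 = -(1 + ζ) ≡ 1`. Hence `μ₃`
maps isomorphically onto `ℤ/3`, i.e. it is a complement of `Υ` in `Γ(√-3)`.
-/

lemma zeta3_im_pos : 0 < zeta3.im := by
  rw [zeta3, show 2 * (Real.pi : ℂ) * Complex.I / 3 = (2 * Real.pi / 3 : ℝ) * Complex.I by
    push_cast; ring, Complex.exp_ofReal_mul_I_im]
  apply Real.sin_pos_of_pos_of_lt_pi <;> nlinarith [Real.pi_pos]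

lemma intCast_add_intCast_mul_zeta3_eq_zero {m n : ℤ} (h : (m : ℂ) + n * zeta3 = 0) :
    m = 0 ∧ n = 0 := by
  have him : (n : ℝ) * zeta3.im = 0 := by simpa using congrArg Complex.im h
  obtain rfl : n = 0 := by exact_mod_cast (mul_eq_zero.mp him).resolve_right zeta3_im_pos.ne'
  exact ⟨by simpa using h, rfl⟩

lemma mem_Eis_iff {x : ℂ} : x ∈ Eis ↔ ∃ a b : ℤ, x = a + b * zeta3 := by
  refine ⟨fun hx => ?_, ?_⟩
  · induction hx using Subring.closure_induction with
    | mem y hy => exact ⟨0, 1, by rw [Set.mem_singleton_iff.mp hy]; push_cast; ring⟩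
    | zero => exact ⟨0, 0, by push_cast; ring⟩
    | one => exact ⟨1, 0, by push_cast; ring⟩
    | add _ _ _ _ hx hy =>
      obtain ⟨a, b, rfl⟩ := hx; obtain ⟨c, d, rfl⟩ := hy
      exact ⟨a + c, b + d, by push_cast; ring⟩
    | neg _ _ hx =>
      obtain ⟨a, b, rfl⟩ := hx
      exact ⟨-a, -b, by push_cast; ring⟩
    | mul _ _ _ _ hx hy =>
      obtain ⟨a, b, rfl⟩ := hx; obtain ⟨c, d, rfl⟩ := hy
      exact ⟨a * c - b * d, a * d + b * c - b * d, by
        push_cast; linear_combination (b * d : ℂ) * zeta3_quad⟩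
  · rintro ⟨a, b, rfl⟩
    exact Eis.add_mem (intCast_mem Eis a) (Eis.mul_mem (intCast_mem Eis b) zeta3_mem_Eis)

lemma sqrt3_ne_zero : sqrt3 ≠ 0 := by
  intro h
  simpa [h] using sqrt3_sq

lemma zeta3_sub_one_eq : zeta3 - 1 = sqrt3 * (zeta3 + 1) := by
  rw [sqrt3]
  linear_combination -2 * zeta3_quad

lemma mulSet_sub {c x y : ℂ} (hx : x ∈ mulSet c) (hy : y ∈ mulSet c) : x - y ∈ mulSet c := by
  rw [sub_eq_add_neg]
  exact mulSet_add hx (mulSet_neg hy)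

lemma neg_mem_mulSet_iff {c x : ℂ} : -x ∈ mulSet c ↔ x ∈ mulSet c :=
  ⟨fun h => by simpa using mulSet_neg h, mulSet_neg⟩

lemma div_sqrt3_mem_Eis {x : ℂ} (hx : x ∈ mulSet sqrt3) : x / sqrt3 ∈ Eis := by
  obtain ⟨y, hy, rfl⟩ := hx
  rwa [mul_div_cancel_left₀ _ sqrt3_ne_zero]

lemma mem_mulSet_three_iff {x : ℂ} : x ∈ mulSet 3 ↔ x / sqrt3 ∈ mulSet sqrt3 := by
  constructor
  · rintro ⟨y, hy, rfl⟩
    exact ⟨-y, Eis.neg_mem hy, by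
      rw [div_eq_iff sqrt3_ne_zero]; linear_combination y * sqrt3_sq⟩
  · rintro ⟨y, hy, hxy⟩
    rw [div_eq_iff sqrt3_ne_zero] at hxy
    exact ⟨-y, Eis.neg_mem hy, by linear_combination hxy + y * sqrt3_sq⟩

lemma three_dvd_of_intCast_mem_mulSet_sqrt3 {n : ℤ} (h : (n : ℂ) ∈ mulSet sqrt3) :
    (3 : ℤ) ∣ n := by
  obtain ⟨y, hy, hn⟩ := h
  obtain ⟨a, b, rfl⟩ := mem_Eis_iff.mp hy
  have key : ((a - 2 * b - n : ℤ) : ℂ) + ((2 * a - b : ℤ) : ℂ) * zeta3 = 0 := by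
    rw [sqrt3] at hn
    push_cast
    linear_combination -hn - 2 * (b : ℂ) * zeta3_quad
  obtain ⟨h1, h2⟩ := intCast_add_intCast_mul_zeta3_eq_zero key
  exact ⟨-a, by omega⟩

lemma exists_sub_intCast_mem_mulSet_sqrt3 {x : ℂ} (hx : x ∈ Eis) :
    ∃ m : ℤ, x - m ∈ mulSet sqrt3 := by
  obtain ⟨a, b, rfl⟩ := mem_Eis_iff.mp hx
  refine ⟨a + b, (zeta3 + 1) * b,
    Eis.mul_mem (Eis.add_mem zeta3_mem_Eis Eis.one_mem) (intCast_mem Eis b), ?_⟩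
  push_cast
  linear_combination (b : ℂ) * zeta3_sub_one_eq

open scoped Classical in
/-- The class of `x ∈ ℤ[ζ]` in `ℤ[ζ]/(√-3) ≅ ℤ/3` (with junk value `0` outside `ℤ[ζ]`). -/
def residueSqrt3 (x : ℂ) : ZMod 3 :=
  if h : ∃ m : ℤ, x - m ∈ mulSet sqrt3 then (h.choose : ZMod 3) else 0

lemma residueSqrt3_eq_intCast {x : ℂ} {m : ℤ} (hm : x - m ∈ mulSet sqrt3) :
    residueSqrt3 x = m := by
  have h : ∃ m : ℤ, x - m ∈ mulSet sqrt3 := ⟨m, hm⟩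
  rw [residueSqrt3, dif_pos h, ← sub_eq_zero, ← Int.cast_sub,
    ZMod.intCast_zmod_eq_zero_iff_dvd]
  refine three_dvd_of_intCast_mem_mulSet_sqrt3 ?_
  rw [show ((h.choose - m : ℤ) : ℂ) = (x - m) - (x - h.choose) by push_cast; ring]
  exact mulSet_sub hm h.choose_spec

lemma residueSqrt3_congr {x y : ℂ} (hy : y ∈ Eis) (hxy : x - y ∈ mulSet sqrt3) :
    residueSqrt3 x = residueSqrt3 y := by
  obtain ⟨m, hm⟩ := exists_sub_intCast_mem_mulSet_sqrt3 hy
  rw [residueSqrt3_eq_intCast hm, residueSqrt3_eq_intCast (by simpa using mulSet_add hxy hm)]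

lemma residueSqrt3_add {x y : ℂ} (hx : x ∈ Eis) (hy : y ∈ Eis) :
    residueSqrt3 (x + y) = residueSqrt3 x + residueSqrt3 y := by
  obtain ⟨m, hm⟩ := exists_sub_intCast_mem_mulSet_sqrt3 hx
  obtain ⟨n, hn⟩ := exists_sub_intCast_mem_mulSet_sqrt3 hy
  have hmn : x + y - ((m + n : ℤ) : ℂ) ∈ mulSet sqrt3 := by
    simpa [add_sub_add_comm] using mulSet_add hm hn
  rw [residueSqrt3_eq_intCast hm, residueSqrt3_eq_intCast hn, residueSqrt3_eq_intCast hmn,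
    Int.cast_add]

lemma residueSqrt3_eq_zero_iff {x : ℂ} (hx : x ∈ Eis) :
    residueSqrt3 x = 0 ↔ x ∈ mulSet sqrt3 := by
  obtain ⟨m, hm⟩ := exists_sub_intCast_mem_mulSet_sqrt3 hx
  rw [residueSqrt3_eq_intCast hm, ZMod.intCast_zmod_eq_zero_iff_dvd]
  constructor
  · rintro ⟨k, rfl⟩
    have h3k : ((3 * k : ℤ) : ℂ) ∈ mulSet sqrt3 :=
      three_subset_sqrt3 ⟨k, intCast_mem Eis k, by push_cast; ring⟩
    simpa using mulSet_add hm h3k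
  · intro hx'
    exact three_dvd_of_intCast_mem_mulSet_sqrt3 (by simpa using mulSet_sub hx' hm)

/-- The sign makes `ζI₃` correspond to `1 ∈ ℤ/3`. -/
def cornerCoord (g : SLC 3) : ℂ := (1 - (g : Matrix (Fin 3) (Fin 3) ℂ) 0 0) / sqrt3

lemma sub_one_mem_mulSet_sqrt3 {g : SLC 3} (hg : g ∈ GammaS3) (i j : Fin 3) :
    ((g : Matrix (Fin 3) (Fin 3) ℂ) - 1) i j ∈ mulSet sqrt3 :=
  hg.2 i j

lemma cornerCoord_mem_Eis {g : SLC 3} (hg : g ∈ GammaS3) : cornerCoord g ∈ Eis := by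
  refine div_sqrt3_mem_Eis ?_
  simpa using mulSet_neg (sub_one_mem_mulSet_sqrt3 hg 0 0)

lemma sub_one_mul_sub_one_mem_mulSet_three {a b : SLC 3} (ha : a ∈ GammaS3) (hb : b ∈ GammaS3)
    (i j : Fin 3) :
    (((a : Matrix (Fin 3) (Fin 3) ℂ) - 1) * ((b : Matrix (Fin 3) (Fin 3) ℂ) - 1)) i j
      ∈ mulSet 3 := by
  rw [Matrix.mul_apply]
  exact Finset.sum_induction _ _ (fun _ _ => mulSet_add) (mulSet_zero _) fun k _ =>
    sqrt3_mul_sqrt3 (sub_one_mem_mulSet_sqrt3 ha i k) (sub_one_mem_mulSet_sqrt3 hb k j)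

lemma cornerCoord_mul_sub_mem {a b : SLC 3} (ha : a ∈ GammaS3) (hb : b ∈ GammaS3) :
    cornerCoord (a * b) - (cornerCoord a + cornerCoord b) ∈ mulSet sqrt3 := by
  set A : Matrix (Fin 3) (Fin 3) ℂ := ↑a
  set B : Matrix (Fin 3) (Fin 3) ℂ := ↑b
  have hprod : (A * B) 0 0 = A 0 0 + B 0 0 - 1 + ((A - 1) * (B - 1)) 0 0 := by
    rw [show (A - 1) * (B - 1) = A * B - A - B + 1 by noncomm_ring]
    simp
  have hdiff : cornerCoord (a * b) - (cornerCoord a + cornerCoord b) =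
      -(((A - 1) * (B - 1)) 0 0 / sqrt3) := by
    simp only [cornerCoord, Matrix.SpecialLinearGroup.coe_mul]
    rw [hprod]
    ring
  rw [hdiff]
  exact mulSet_neg (mem_mulSet_three_iff.mp (sub_one_mul_sub_one_mem_mulSet_three ha hb 0 0))

def cornerResidue : GammaS3 →* Multiplicative (ZMod 3) where
  toFun g := Multiplicative.ofAdd (residueSqrt3 (cornerCoord g))
  map_one' := by
    simp [cornerCoord, residueSqrt3_eq_zero_iff Eis.zero_mem, mulSet_zero]
  map_mul' a b := by
    rw [← ofAdd_add, ← residueSqrt3_add (cornerCoord_mem_Eis a.2) (cornerCoord_mem_Eis b.2)]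
    exact congrArg _ (residueSqrt3_congr
      (Eis.add_mem (cornerCoord_mem_Eis a.2) (cornerCoord_mem_Eis b.2))
      (cornerCoord_mul_sub_mem a.2 b.2))

lemma ker_cornerResidue : cornerResidue.ker = Upsilon.subgroupOf GammaS3 := by
  ext g
  rw [MonoidHom.mem_ker, Subgroup.mem_subgroupOf]
  change Multiplicative.ofAdd _ = Multiplicative.ofAdd 0 ↔ _
  have hcoord : cornerCoord g =
      -((((g : SLC 3) : Matrix (Fin 3) (Fin 3) ℂ) 0 0 - 1) / sqrt3) := by
    rw [cornerCoord]; ring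
  rw [Equiv.apply_eq_iff_eq, residueSqrt3_eq_zero_iff (cornerCoord_mem_Eis g.2), hcoord,
    neg_mem_mulSet_iff, ← mem_mulSet_three_iff]
  exact ⟨fun h => ⟨g.2, h⟩, And.right⟩

lemma zISL_coe : (zISL : Matrix (Fin 3) (Fin 3) ℂ) = zeta3 • 1 := rfl

lemma zISL_mem_GammaS3 : zISL ∈ GammaS3 := by
  refine ⟨⟨fun i j => ?_, ?_⟩, fun i j => ?_⟩
  · rw [zISL_coe, Matrix.smul_apply, Matrix.one_apply]
    split_ifs <;> simp [zeta3_mem_Eis, Eis.zero_mem]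
  · have hz : zeta3 * starRingEnd ℂ zeta3 = 1 := by
      rw [zeta3_conj, ← pow_succ', zeta3_pow_three]
    simp [zISL_coe, Matrix.conjTranspose_smul, smul_smul, hz]
  · rw [zISL_coe, Matrix.smul_apply, smul_eq_mul, ← sub_one_mul, zeta3_sub_one_eq, mul_assoc]
    refine ⟨_, Eis.mul_mem (Eis.add_mem zeta3_mem_Eis Eis.one_mem) ?_, rfl⟩
    rw [Matrix.one_apply]
    split_ifs
    exacts [Eis.one_mem, Eis.zero_mem]

lemma cornerCoord_zISL : cornerCoord zISL = -(zeta3 + 1) := by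
  rw [cornerCoord, zISL_coe, Matrix.smul_apply, Matrix.one_apply_eq, smul_eq_mul, mul_one,
    div_eq_iff sqrt3_ne_zero]
  linear_combination -zeta3_sub_one_eq

lemma cornerResidue_zISL_pow (n : ℕ) :
    cornerResidue (⟨zISL, zISL_mem_GammaS3⟩ ^ n) = Multiplicative.ofAdd (n : ZMod 3) := by
  have h : residueSqrt3 (cornerCoord zISL) = ((1 : ℤ) : ZMod 3) := by
    refine residueSqrt3_eq_intCast ⟨-(zeta3 + 1) + sqrt3,
      Eis.add_mem (Eis.neg_mem (Eis.add_mem zeta3_mem_Eis Eis.one_mem)) sqrt3_mem_Eis, ?_⟩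
    rw [cornerCoord_zISL]
    push_cast
    linear_combination -zeta3_sub_one_eq - sqrt3_sq
  rw [map_pow, ← nsmul_one, ofAdd_nsmul]
  exact congrArg (· ^ n) (congrArg Multiplicative.ofAdd (h.trans Int.cast_one))

lemma relIndex_Upsilon_GammaS3 : Upsilon.relIndex GammaS3 = 3 := by
  have hsurj : Function.Surjective cornerResidue := fun t =>
    ⟨_, (cornerResidue_zISL_pow t.toAdd.val).trans (by rw [ZMod.natCast_zmod_val]; rfl)⟩
  change (Upsilon.subgroupOf GammaS3).index = 3
  rw [← ker_cornerResidue, Subgroup.index_ker, MonoidHom.range_eq_top.mpr hsurj,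
    Subgroup.card_top]
  simp

lemma zISL_ne_one : zISL ≠ 1 := by
  intro h
  have h00 := congrArg (fun g : SLC 3 => (g : Matrix (Fin 3) (Fin 3) ℂ) 0 0) h
  simp only [zISL_coe, Matrix.smul_apply, Matrix.one_apply_eq, smul_eq_mul, mul_one,
    Matrix.SpecialLinearGroup.coe_one] at h00
  exact zeta3_ne_one h00

lemma zISL_pow_three : zISL ^ 3 = 1 := by
  ext : 1
  rw [Matrix.SpecialLinearGroup.coe_pow, zISL_coe, smul_pow, one_pow, zeta3_pow_three, one_smul,
    Matrix.SpecialLinearGroup.coe_one]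

lemma mem_muThree_iff {x : SLC 3} : x ∈ muThree ↔ ∃ n < 3, zISL ^ n = x := by
  classical
  have hfin : IsOfFinOrder zISL := isOfFinOrder_iff_pow_eq_one.mpr ⟨3, by norm_num, zISL_pow_three⟩
  rw [muThree, hfin.mem_zpowers_iff_mem_range_orderOf, orderOf_eq_prime zISL_pow_three zISL_ne_one]
  simp

lemma coe_muThree : (muThree : Set (SLC 3)) = {1, zISL, zISL * zISL} := by
  ext x
  rw [SetLike.mem_coe, mem_muThree_iff]
  constructor
  · rintro ⟨n, hn, rfl⟩
    interval_cases n <;> simp [pow_two]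
  · rintro (rfl | rfl | rfl)
    exacts [⟨0, by norm_num, pow_zero _⟩, ⟨1, by norm_num, pow_one _⟩, ⟨2, by norm_num, pow_two _⟩]

lemma commute_zISL (g : SLC 3) : Commute zISL g := by
  ext : 1
  simp [zISL_coe]

lemma Upsilon_inf_muThree_eq_bot : Upsilon ⊓ muThree = ⊥ := by
  rw [eq_bot_iff]
  rintro x ⟨hxU, hxM⟩
  obtain ⟨n, hn, rfl⟩ := mem_muThree_iff.mp hxM
  have hker : ⟨zISL, zISL_mem_GammaS3⟩ ^ n ∈ cornerResidue.ker := by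
    rwa [ker_cornerResidue, Subgroup.mem_subgroupOf, Subgroup.coe_pow]
  rw [MonoidHom.mem_ker, cornerResidue_zISL_pow, ofAdd_eq_one, ZMod.natCast_eq_zero_iff] at hker
  obtain rfl : n = 0 := by omega
  exact (pow_zero zISL).symm ▸ Subgroup.one_mem _

lemma exists_mem_Upsilon_mul_mem_muThree {g : SLC 3} (hg : g ∈ GammaS3) :
    ∃ u ∈ Upsilon, ∃ c ∈ muThree, u * c = g := by
  set n := (cornerResidue ⟨g, hg⟩).toAdd.val
  have hu : ⟨g, hg⟩ * (⟨zISL, zISL_mem_GammaS3⟩ ^ n)⁻¹ ∈ cornerResidue.ker := by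
    rw [MonoidHom.mem_ker, map_mul, map_inv, cornerResidue_zISL_pow, ZMod.natCast_zmod_val,
      ofAdd_toAdd, mul_inv_cancel]
  rw [ker_cornerResidue, Subgroup.mem_subgroupOf] at hu
  exact ⟨_, hu, zISL ^ n, Subgroup.pow_mem _ (Subgroup.mem_zpowers _) n,
    inv_mul_cancel_right g _⟩

/-- `Γ(√-3)` is the internal direct product of `Υ` and the central
subgroup `μ₃ = {I₃, ζI₃, ζ²I₃}`: `μ₃ ⊆ Γ(√-3)` is central, `Υ` has index `3` in `Γ(√-3)`,
`Υ ∩ μ₃ = {I₃}`, and every element of `Γ(√-3)` is uniquely `u·c` with `u ∈ Υ`, `c ∈ μ₃`. -/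
theorem statement9 :
    (muThree : Set (SLC 3)) = {1, zISL, zISL * zISL} ∧
    muThree ≤ GammaS3 ∧
    (∀ c ∈ muThree, ∀ g : SLC 3, c * g = g * c) ∧
    Upsilon ≤ GammaS3 ∧
    Upsilon.relIndex GammaS3 = 3 ∧
    Upsilon ⊓ muThree = ⊥ ∧
    ∀ g ∈ GammaS3, ∃! p : ↥Upsilon × ↥muThree,
      ((p.1 : SLC 3) * (p.2 : SLC 3)) = g := by
  refine ⟨coe_muThree, Subgroup.zpowers_le.mpr zISL_mem_GammaS3, fun c hc g => ?_,
    fun g hg => hg.1, relIndex_Upsilon_GammaS3, Upsilon_inf_muThree_eq_bot, fun g hg => ?_⟩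
  · obtain ⟨k, rfl⟩ := Subgroup.mem_zpowers_iff.mp hc
    exact ((commute_zISL g).zpow_left k).eq
  · obtain ⟨u, hu, c, hc, rfl⟩ := exists_mem_Upsilon_mul_mem_muThree hg
    exact ⟨(⟨u, hu⟩, ⟨c, hc⟩), rfl, fun p hp =>
      Subgroup.mul_injective_of_disjoint (disjoint_iff.mpr Upsilon_inf_muThree_eq_bot) hp⟩
end
end
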